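/- Let $(x_n)_{n=0}^N$ be a real-valued martingale with square function $S_N(x)$, maximal difference $dx_N^*$, and stopping time $\mu = \inf\{n : S_n(x) \ge 1\}$. Then for every $\beta > 1$, $\mathbb P(S_N(x) \ge \beta) \le \frac{1}{\beta^2 - 1}\,\mathbb E\big[(x_N^2 + (dx_N^*)^2)\,\mathbf 1_{\{S_N(x) \ge 1\}}\big]$. -/

import Mathlib

open MeasureTheory Finset

/-!
Write `Q n = ∑_{k ≤ n} dx_k² = S_n²` and let `τ` be the first `n` with `Q n ≥ 1`. Pathwise,
`Q N - 1 ≤ dx_τ² + ∑_{τ ≤ k < N} dx_{k+1}²`: before `τ` the partial sum is below `1`, and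
`{τ ≤ k} = {Q k ≥ 1}` lies in `ℱ k`. Since martingale increments are orthogonal to `ℱ k`,
`E[dx_{k+1}²; Q k ≥ 1] = E[x_{k+1}² - x_k²; Q k ≥ 1]`, and as the sets `{Q k ≥ 1}` increase these
terms telescope to at most `E[x_N²; Q N ≥ 1]`. Chebyshev's inequality in the form
`(β² - 1) 1_{S_N ≥ β} ≤ (S_N² - 1) 1_{S_N ≥ 1}` finishes the proof.
-/

def sumSq (d : ℕ → ℝ) (n : ℕ) : ℝ := ∑ k ∈ range (n + 1), d k ^ 2

lemma sumSq_zero (d : ℕ → ℝ) : sumSq d 0 = d 0 ^ 2 := by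
  simp [sumSq]

lemma sumSq_nonneg (d : ℕ → ℝ) (n : ℕ) : 0 ≤ sumSq d n :=
  sum_nonneg fun k _ => sq_nonneg (d k)

lemma sumSq_succ (d : ℕ → ℝ) (n : ℕ) : sumSq d (n + 1) = sumSq d n + d (n + 1) ^ 2 :=
  sum_range_succ _ _

lemma monotone_sumSq (d : ℕ → ℝ) : Monotone (sumSq d) :=
  monotone_nat_of_le_succ fun n => by rw [sumSq_succ]; linarith [sq_nonneg (d (n + 1))]

lemma sumSq_sub_one_le (d : ℕ → ℝ) {c : ℝ} {n : ℕ} (hc : ∀ k ≤ n, d k ^ 2 ≤ c) :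
    sumSq d n - 1 ≤ ∑ k ∈ range n, (if 1 ≤ sumSq d k then d (k + 1) ^ 2 else 0) + c := by
  induction n with
  | zero => simp only [sumSq_zero, range_zero, sum_empty]; linarith [hc 0 le_rfl]
  | succ n ih =>
    rw [sumSq_succ, sum_range_succ]
    by_cases h : 1 ≤ sumSq d n
    · rw [if_pos h]
      linarith [ih fun k hk => hc k (by omega)]
    · have hnonneg : 0 ≤ ∑ k ∈ range n, (if 1 ≤ sumSq d k then d (k + 1) ^ 2 else 0) :=
        sum_nonneg fun k _ => by split_ifs <;> positivity
      rw [if_neg h]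
      linarith [hc (n + 1) le_rfl]

lemma eq_sum_range_of_increments {α : Type*} [AddCommGroup α] {x dx : ℕ → α} (hdx0 : dx 0 = x 0)
    (hdx : ∀ k, dx (k + 1) = x (k + 1) - x k) (n : ℕ) : x n = ∑ k ∈ range (n + 1), dx k := by
  induction n with
  | zero => simp [hdx0]
  | succ n ih => rw [sum_range_succ, ← ih, hdx]; abel

namespace MeasureTheory

variable {Ω : Type*} {m0 : MeasurableSpace Ω} {μ : Measure Ω} {ℱ : Filtration ℕ m0}

lemma StronglyAdapted.of_increments {x dx : ℕ → Ω → ℝ} (hx : StronglyAdapted ℱ x)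
    (hdx0 : dx 0 = x 0) (hdx : ∀ k, dx (k + 1) = x (k + 1) - x k) : StronglyAdapted ℱ dx
  | 0 => hdx0 ▸ hx 0
  | k + 1 => hdx k ▸ (hx (k + 1)).sub ((hx k).mono (ℱ.mono k.le_succ))

lemma memLp_of_increments {x dx : ℕ → Ω → ℝ} {p : ENNReal} (hdx0 : dx 0 = x 0)
    (hdx : ∀ k, dx (k + 1) = x (k + 1) - x k) (h : ∀ k, MemLp (dx k) p μ) (n : ℕ) :
    MemLp (x n) p μ :=
  eq_sum_range_of_increments hdx0 hdx n ▸ memLp_finsetSum' _ fun k _ => h k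

lemma StronglyAdapted.sumSq {dx : ℕ → Ω → ℝ} (hdx : StronglyAdapted ℱ dx) :
    StronglyAdapted ℱ fun n ω => sumSq (dx · ω) n := fun _ =>
  Finset.stronglyMeasurable_fun_sum _ fun k hk =>
    ((hdx k).mono (ℱ.mono (Nat.lt_succ_iff.mp (mem_range.mp hk)))).pow 2

lemma memLp_sup'_abs {dx : ℕ → Ω → ℝ} {p : ENNReal} (h : ∀ k, MemLp (dx k) p μ) (N : ℕ) :
    MemLp (fun ω => (range (N + 1)).sup' nonempty_range_add_one fun n => |dx n ω|) p μ := by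
  have hsup := Finset.sup'_induction (s := range (N + 1)) nonempty_range_add_one
    (fun n ω => |dx n ω|) (p := fun f => MemLp f p μ) (fun _ hf _ hg => hf.sup hg)
    fun k _ => (h k).abs
  convert hsup using 1
  ext ω
  rw [Finset.sup'_apply]

variable [IsFiniteMeasure μ] {x : ℕ → Ω → ℝ}

lemma Martingale.integral_mul_eq (hx : Martingale x ℱ μ) {i j : ℕ} (hij : i ≤ j) {g : Ω → ℝ}
    (hg : StronglyMeasurable[ℱ i] g) (hgx : Integrable (g * x j) μ) :
    ∫ ω, g ω * x j ω ∂μ = ∫ ω, g ω * x i ω ∂μ :=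
  calc ∫ ω, g ω * x j ω ∂μ = ∫ ω, μ[g * x j | ℱ i] ω ∂μ := (integral_condExp (ℱ.le i)).symm
    _ = ∫ ω, g ω * x i ω ∂μ := integral_congr_ae <|
        (condExp_mul_of_stronglyMeasurable_left hg hgx (hx.integrable j)).trans <|
          (hx.condExp_ae_eq hij).mono fun ω hω => by simp only [Pi.mul_apply, hω]

lemma Martingale.setIntegral_sq_sub (hx : Martingale x ℱ μ) {i j : ℕ} (hij : i ≤ j)
    (hi : MemLp (x i) 2 μ) (hj : MemLp (x j) 2 μ) {s : Set Ω} (hs : MeasurableSet[ℱ i] s) :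
    ∫ ω in s, (x j ω - x i ω) ^ 2 ∂μ = ∫ ω in s, x j ω ^ 2 ∂μ - ∫ ω in s, x i ω ^ 2 ∂μ := by
  have hs0 : MeasurableSet s := ℱ.le i s hs
  set g := s.indicator (x i)
  have hgL2 : MemLp g 2 μ := hi.indicator hs0
  have horth : ∫ ω, g ω * x j ω ∂μ = ∫ ω, g ω * x i ω ∂μ :=
    hx.integral_mul_eq hij ((hx.stronglyAdapted i).indicator hs) (hgL2.integrable_mul hj)
  have horth' : ∫ ω in s, x i ω * x j ω ∂μ = ∫ ω in s, x i ω * x i ω ∂μ := by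
    simpa only [g, ← Set.indicator_mul_left, integral_indicator hs0] using horth
  have hij_int : Integrable (fun ω => x i ω * x j ω) μ := hi.integrable_mul hj
  have hii_int : Integrable (fun ω => x i ω * x i ω) μ := hi.integrable_mul hi
  calc ∫ ω in s, (x j ω - x i ω) ^ 2 ∂μ
      = ∫ ω in s, (x j ω ^ 2 - x i ω ^ 2 - 2 * (x i ω * x j ω - x i ω * x i ω)) ∂μ := by
        congr 1 with ω; ring
    _ = ∫ ω in s, x j ω ^ 2 ∂μ - ∫ ω in s, x i ω ^ 2 ∂μ := by
        have hsq : IntegrableOn (fun ω => x j ω ^ 2 - x i ω ^ 2) s μ :=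
          (hj.integrable_sq.sub hi.integrable_sq).integrableOn
        have hcross : IntegrableOn (fun ω => 2 * (x i ω * x j ω - x i ω * x i ω)) s μ :=
          ((hij_int.sub hii_int).const_mul 2).integrableOn
        rw [integral_sub hsq hcross, integral_const_mul,
          integral_sub hij_int.integrableOn hii_int.integrableOn, horth', sub_self, mul_zero,
          sub_zero, integral_sub hj.integrable_sq.integrableOn hi.integrable_sq.integrableOn]

theorem Martingale.sum_setIntegral_sq_sub_le (hx : Martingale x ℱ μ)
    (hL2 : ∀ k, MemLp (x k) 2 μ) {A : ℕ → Set Ω} (hA : ∀ k, MeasurableSet[ℱ k] (A k))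
    (hAmono : Monotone A) (n : ℕ) :
    ∑ k ∈ range n, ∫ ω in A k, (x (k + 1) ω - x k ω) ^ 2 ∂μ ≤ ∫ ω in A n, x n ω ^ 2 ∂μ := by
  induction n with
  | zero => simpa using integral_nonneg fun ω => sq_nonneg (x 0 ω)
  | succ n ih =>
    rw [sum_range_succ, hx.setIntegral_sq_sub n.le_succ (hL2 n) (hL2 (n + 1)) (hA n)]
    have hgrow : ∫ ω in A n, x (n + 1) ω ^ 2 ∂μ ≤ ∫ ω in A (n + 1), x (n + 1) ω ^ 2 ∂μ :=
      setIntegral_mono_set (hL2 (n + 1)).integrable_sq.integrableOn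
        (ae_of_all _ fun ω => sq_nonneg _) (hAmono n.le_succ).eventuallyLE
    linarith

theorem Martingale.setIntegral_sumSq_sub_one_le (hx : Martingale x ℱ μ) {dx : ℕ → Ω → ℝ}
    (hdx0 : dx 0 = x 0) (hdx : ∀ k, dx (k + 1) = x (k + 1) - x k) (hdx2 : ∀ k, MemLp (dx k) 2 μ)
    (N : ℕ) :
    ∫ ω in {ω | 1 ≤ sumSq (dx · ω) N}, (sumSq (dx · ω) N - 1) ∂μ ≤
      ∫ ω in {ω | 1 ≤ sumSq (dx · ω) N},
        (x N ω ^ 2 + ((range (N + 1)).sup' nonempty_range_add_one fun n => |dx n ω|) ^ 2) ∂μ := by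
  set A : ℕ → Set Ω := fun n => {ω | 1 ≤ sumSq (dx · ω) n}
  set M : Ω → ℝ := fun ω => (range (N + 1)).sup' nonempty_range_add_one fun n => |dx n ω|
  set T : Ω → ℝ := fun ω => ∑ k ∈ range N, (A k).indicator (fun ω => dx (k + 1) ω ^ 2) ω
  have hA : ∀ k, MeasurableSet[ℱ k] (A k) := fun k =>
    measurableSet_le measurable_const
      ((hx.stronglyAdapted.of_increments hdx0 hdx).sumSq k).measurable
  have hT : Integrable T μ :=
    integrable_finsetSum _ fun k _ => (hdx2 (k + 1)).integrable_sq.indicator (ℱ.le k _ (hA k))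
  have hM : Integrable (fun ω => M ω ^ 2) μ := (memLp_sup'_abs hdx2 N).integrable_sq
  have hQ : Integrable (fun ω => sumSq (dx · ω) N - 1) μ :=
    (integrable_finsetSum _ fun k _ => (hdx2 k).integrable_sq).sub (integrable_const 1)
  have hpointwise : ∀ ω, sumSq (dx · ω) N - 1 ≤ T ω + M ω ^ 2 := fun ω => by
    simpa only [T, A, Set.indicator_apply, Set.mem_ofPred_eq] using
      sumSq_sub_one_le (dx · ω) fun k hk => by
        rw [← sq_abs]
        gcongr
        exact le_sup' (fun n => |dx n ω|) (mem_range.mpr (Nat.lt_succ_of_le hk))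
  have hTint : ∫ ω, T ω ∂μ ≤ ∫ ω in A N, x N ω ^ 2 ∂μ := by
    rw [integral_finsetSum _ fun k _ => (hdx2 (k + 1)).integrable_sq.indicator (ℱ.le k _ (hA k))]
    simpa only [integral_indicator (ℱ.le _ _ (hA _)), hdx, Pi.sub_apply] using
      hx.sum_setIntegral_sq_sub_le (memLp_of_increments hdx0 hdx hdx2) hA
        (fun _ _ hkl _ hω => (monotone_sumSq _ hkl).trans' hω) N
  calc ∫ ω in A N, (sumSq (dx · ω) N - 1) ∂μ
      ≤ ∫ ω in A N, (T ω + M ω ^ 2) ∂μ :=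
        setIntegral_mono hQ.integrableOn (hT.add hM).integrableOn hpointwise
    _ = ∫ ω in A N, T ω ∂μ + ∫ ω in A N, M ω ^ 2 ∂μ := integral_add hT.integrableOn hM.integrableOn
    _ ≤ ∫ ω in A N, x N ω ^ 2 ∂μ + ∫ ω in A N, M ω ^ 2 ∂μ :=
        add_le_add_left ((setIntegral_le_integral hT (ae_of_all _ fun ω =>
          sum_nonneg fun k _ => Set.indicator_nonneg (fun ω _ => sq_nonneg _) ω)).trans hTint) _
    _ = ∫ ω in A N, (x N ω ^ 2 + M ω ^ 2) ∂μ :=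
        (integral_add ((memLp_of_increments hdx0 hdx hdx2 N).integrable_sq.integrableOn)
          hM.integrableOn).symm

end MeasureTheory

lemma mul_measureReal_le_setIntegral_sq_sub_one {Ω : Type*} {m0 : MeasurableSpace Ω}
    {μ : Measure Ω} [IsFiniteMeasure μ] {f : Ω → ℝ} (hf : Measurable f)
    (hf2 : Integrable (fun ω => f ω ^ 2) μ) {β : ℝ} (hβ : 1 ≤ β) :
    (β ^ 2 - 1) * μ.real {ω | β ≤ f ω} ≤ ∫ ω in {ω | 1 ≤ f ω}, (f ω ^ 2 - 1) ∂μ := by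
  have hsub : Integrable (fun ω => f ω ^ 2 - 1) μ := hf2.sub (integrable_const 1)
  calc (β ^ 2 - 1) * μ.real {ω | β ≤ f ω} = ∫ _ in {ω | β ≤ f ω}, (β ^ 2 - 1) ∂μ := by
        rw [setIntegral_const, smul_eq_mul, mul_comm]
    _ ≤ ∫ ω in {ω | β ≤ f ω}, (f ω ^ 2 - 1) ∂μ :=
        setIntegral_mono_on (integrableOn_const (measure_ne_top _ _)) hsub.integrableOn
          (measurableSet_le measurable_const hf) fun ω (hω : β ≤ f ω) => by nlinarith
    _ ≤ ∫ ω in {ω | 1 ≤ f ω}, (f ω ^ 2 - 1) ∂μ :=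
        setIntegral_mono_set hsub.integrableOn
          ((ae_restrict_iff' (measurableSet_le measurable_const hf)).mpr
            (ae_of_all _ fun ω (hω : 1 ≤ f ω) => show (0 : ℝ) ≤ f ω ^ 2 - 1 by nlinarith))
          (ae_of_all _ fun ω (hω : β ≤ f ω) => hβ.trans hω)

theorem square_function_good_lambda_tail_general
    {Ω : Type*} [m0 : MeasurableSpace Ω] {μ : Measure Ω} [IsProbabilityMeasure μ]
    (ℱ : Filtration ℕ m0) (x : ℕ → Ω → ℝ) (hx : Martingale x ℱ μ) (N : ℕ)
    (dx : ℕ → Ω → ℝ) (hdx0 : dx 0 = x 0)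
    (hdx : ∀ k : ℕ, dx (k + 1) = x (k + 1) - x k)
    (S : ℕ → Ω → ℝ)
    (hS : ∀ n ω, S n ω = Real.sqrt (∑ k ∈ Finset.range (n + 1), dx k ω ^ 2))
    (hint : ∀ k, Integrable (fun ω => dx k ω ^ 2) μ)
    (β : ℝ) (hβ : 1 < β) :
    (μ {ω | β ≤ S N ω}).toReal
      ≤ (β ^ 2 - 1)⁻¹
        * ∫ ω in {ω | 1 ≤ S N ω},
            (x N ω ^ 2
              + ((Finset.range (N + 1)).sup' (Finset.nonempty_range_add_one)
                  (fun n => |dx n ω|)) ^ 2) ∂μ := by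
  have hdx_adapted := hx.stronglyAdapted.of_increments hdx0 hdx
  have hdx2 : ∀ k, MemLp (dx k) 2 μ := fun k =>
    (memLp_two_iff_integrable_sq ((hdx_adapted k).mono (ℱ.le k)).aestronglyMeasurable).2 (hint k)
  have hS_sumSq : ∀ ω, S N ω = Real.sqrt (sumSq (dx · ω) N) := hS N
  have hS_sq : ∀ ω, S N ω ^ 2 = sumSq (dx · ω) N := fun ω => by
    rw [hS_sumSq, Real.sq_sqrt (sumSq_nonneg _ N)]
  have hS_ge_one : {ω | 1 ≤ S N ω} = {ω | 1 ≤ sumSq (dx · ω) N} := by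
    simp only [hS_sumSq, Real.one_le_sqrt]
  have hS_meas : Measurable (S N) := by
    simpa only [← hS_sumSq] using
      ((hdx_adapted.sumSq N).mono (ℱ.le N)).measurable.sqrt
  have hsumSq_int : Integrable (fun ω => sumSq (dx · ω) N) μ :=
    integrable_finsetSum _ fun k _ => hint k
  rw [← measureReal_def, le_inv_mul_iff₀ (by nlinarith)]
  calc (β ^ 2 - 1) * μ.real {ω | β ≤ S N ω}
      ≤ ∫ ω in {ω | 1 ≤ S N ω}, (S N ω ^ 2 - 1) ∂μ :=
        mul_measureReal_le_setIntegral_sq_sub_one hS_meas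
          (by simpa only [hS_sq] using hsumSq_int) hβ.le
    _ ≤ _ := by
        simpa only [hS_sq, hS_ge_one] using hx.setIntegral_sumSq_sub_one_le hdx0 hdx hdx2 N

/-- Good-λ type tail estimate for the square function of a discrete real martingale:
for `β > 1`, `P(S_N ≥ β) ≤ (β² - 1)⁻¹ E[(x_N² + (dx_N^*)²) 1_{S_N ≥ 1}]`. -/
theorem square_function_good_lambda_tail
    {Ω : Type*} [m0 : MeasurableSpace Ω] {μ : Measure Ω} [IsProbabilityMeasure μ]
    (ℱ : Filtration ℕ m0) (x : ℕ → Ω → ℝ) (hx : Martingale x ℱ μ) (N : ℕ)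
    (dx : ℕ → Ω → ℝ) (hdx0 : dx 0 = x 0)
    (hdx : ∀ k : ℕ, dx (k + 1) = x (k + 1) - x k)
    (S : ℕ → Ω → ℝ)
    (hS : ∀ n ω, S n ω = Real.sqrt (∑ k ∈ Finset.range (n + 1), dx k ω ^ 2))
    (hint : ∀ k, Integrable (fun ω => dx k ω ^ 2) μ)
    (hxint : Integrable (fun ω => x N ω ^ 2) μ)
    (β : ℝ) (hβ : 1 < β) :
    (μ {ω | β ≤ S N ω}).toReal
      ≤ (β ^ 2 - 1)⁻¹
        * ∫ ω in {ω | 1 ≤ S N ω},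
            (x N ω ^ 2
              + ((Finset.range (N + 1)).sup' (Finset.nonempty_range_add_one)
                  (fun n => |dx n ω|)) ^ 2) ∂μ :=
  square_function_good_lambda_tail_general (m0 := m0) ℱ x hx N dx hdx0 hdx S hS hint β hβ
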